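/- Let P = p_1...p_n be a self-uncorrelated word over {A,T,G,C} with p_1 = A and p_n = G. Then any concatenation of the form P^{t_1-1} q_1 P^{t_2-1} q_2 ... P^{t_r-1} q_r W, where 1 ≤ t_j < n, q_j ∈ {A,C,T}\{p_{t_j}}, P^{t} denotes the prefix p_1...p_t, and W ∈ {A,T,C}^{t_0} with t_0 < n, does not contain P as a substring. -/

import Mathlib

inductive Base : Type
  | A | T | G | C
deriving DecidableEq

/-- A word `X` is self-uncorrelated if no proper nonempty prefix of `X`
is also a suffix of `X`. -/
def selfUncorr {α : Type*} (X : List α) : Prop :=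
  ∀ k : ℕ, 0 < k → k < X.length → X.take k ≠ X.drop (X.length - k)

/-- `Code P Z` : `Z` is a concatenation `P^{t₁-1} q₁ ⋯ P^{tᵣ-1} qᵣ W` of blocks,
each consisting of a proper prefix `P^{t-1} = p₁…p_{t-1}` of `P` followed by a
symbol `q ∈ {A,C,T} \ {p_t}`, terminated by a word `W ∈ {A,T,C}^{t₀}` with
`t₀ < n`. -/
inductive Code (P : List Base) : List Base → Prop
  | term (W : List Base) (hlen : W.length < P.length)
      (hW : ∀ a ∈ W, a ≠ Base.G) : Code P W
  | block (t : ℕ) (q : Base) (Z : List Base) (ht1 : 1 ≤ t) (ht2 : t < P.length)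
      (hq : q ≠ Base.G) (hq2 : ∀ (h : t - 1 < P.length), q ≠ P.get ⟨t - 1, h⟩)
      (hZ : Code P Z) : Code P (P.take (t - 1) ++ q :: Z)

/-!
An occurrence of `P` in a code word either lies inside the tail following some block, or
it starts inside a block `P^{t-1} q` and runs past it: then a nonempty proper suffix of `P`
is a prefix of a code word. That is impossible, by induction along the blocks: such a
suffix ends in `G`, so it cannot fit inside the `G`-free terminal word, nor end exactly at
a block symbol `q ≠ G`; a shorter one would be both a prefix and a suffix of `P`; and a
longer one leaves a shorter nonempty proper suffix of `P` as a prefix of the rest.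
-/

theorem List.IsSuffix.getLast?_eq {α : Type*} {s l : List α} (h : s <:+ l) (hs : s ≠ []) :
    s.getLast? = l.getLast? := by
  rw [List.getLast?_eq_some_getLast hs, List.getLast?_eq_some_getLast (h.ne_nil hs), h.getLast hs]

theorem selfUncorr.eq_nil_of_prefix_of_suffix {α : Type*} {X s : List α} (hX : selfUncorr X)
    (hp : s <+: X) (hs : s <:+ X) (hlt : s.length < X.length) : s = [] := by
  by_contra hne
  refine hX s.length (List.length_pos_iff.mpr hne) hlt ?_
  rw [← List.prefix_iff_eq_take.mp hp, ← List.suffix_iff_eq_drop.mp hs]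

theorem Code.not_prefix_of_suffix {P Z : List Base} (hsu : selfUncorr P)
    (hlast : P.getLast? = some Base.G) (hZ : Code P Z) {s : List Base} (hs : s <:+ P)
    (hne : s ≠ []) (hlt : s.length < P.length) : ¬ s <+: Z := by
  have hsG : s.getLast? = some Base.G := (hs.getLast?_eq hne).trans hlast
  induction hZ generalizing s with
  | term W _ hW =>
    intro hsW
    exact hW _ (hsW.subset (List.mem_of_getLast? hsG)) rfl
  | block t q Z' _ _ hq _ _ ih =>
    intro hsZ
    set b := P.take (t - 1) ++ [q]
    have hs_ne_b : s ≠ b := by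
      rintro rfl
      simp only [b, List.getLast?_concat, Option.some.injEq] at hsG
      exact hq hsG
    rw [List.append_cons] at hsZ
    rcases List.prefix_or_prefix_of_prefix hsZ (List.prefix_append b Z') with hsb | hbs
    · rcases List.prefix_concat_iff.mp hsb with hsb | hsP
      · exact hs_ne_b hsb
      · exact hne (hsu.eq_nil_of_prefix_of_suffix (hsP.trans (List.take_prefix _ _)) hs hlt)
    · obtain ⟨u, rfl⟩ := hbs
      have hu : u ≠ [] := fun hu => hs_ne_b (by simp [hu])
      refine ih ((List.suffix_append b u).trans hs) hu ?_ ?_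
        ((List.prefix_append_right_inj b).mp hsZ)
      · rw [List.length_append] at hlt
        omega
      · exact ((List.suffix_append b u).getLast?_eq hu).trans hsG

theorem stmt11_general (P : List Base) (hsu : selfUncorr P)
    (hlast : P.getLast? = some Base.G)
    (Z : List Base) (hZ : Code P Z) : ¬ P <:+: Z := by
  induction hZ with
  | term W hlen _ => exact fun h => absurd h.length_le (by omega)
  | block t q Z' _ ht2 _ _ hZ' ih =>
    rw [List.append_cons, List.infix_append_iff_ne_nil]
    rintro (hblock | hZ'' | ⟨u, s, hu, hs, rfl, -, hsZ'⟩)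
    · have hlen := hblock.length_le
      simp only [List.length_append, List.length_take, List.length_singleton] at hlen
      omega
    · exact ih hZ''
    · refine hZ'.not_prefix_of_suffix hsu hlast (List.suffix_append u s) hs ?_ hsZ'
      simpa [List.length_append] using List.length_pos_iff.mpr hu

/-- If `P` is self-uncorrelated with first symbol `A` and last symbol `G`, then no
string produced by the prefix-synchronized encoding contains `P` as a substring. -/
theorem stmt11 (P : List Base) (hsu : selfUncorr P)
    (hhead : P.head? = some Base.A) (hlast : P.getLast? = some Base.G)
    (Z : List Base) (hZ : Code P Z) : ¬ P <:+: Z :=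
  stmt11_general P hsu hlast Z hZ
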